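/- Let Λ be a ring, (P₀, ε) a differential Λ-module with P₀ projective, and suppose given: a finite projective resolution 0 → P_l →^{∂_l} ⋯ → P₁ →^{∂₁} P₀ → im(ε) → 0 of im(ε) ending in the given P₀ (with ∂₁ followed by ε's corestriction), and Λ-linear maps s_i : P_i → P_{i+1} (0 ≤ i ≤ l−1) with ∂₁ s₀ = ε, ∂_{i+1} s_i + s_{i−1} ∂_i = 0 for 1 ≤ i ≤ l−1, and s_{l−1} ∂_l = 0 (a null-homotopy of the zero-lift). Set ΔP = P_l ⊕ ⋯ ⊕ P₁ ⊕ P₀ with compressed differential ε_{ΔP}, let h : ΔP → ΔP have components h_i = (−1)ⁱ s_i, let e : ΔP → P₀ be the projection and m : P₀ → ΔP the inclusion. Then m ε e = ε_{ΔP} h − h ε_{ΔP}. -/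

import Mathlib

/-!
On each summand `P (j+1)` both `ε_{ΔP} h` and `h ε_{ΔP}` land in `P (j+1)`, with opposite signs
`(-1)^(j+1)` and `(-1)^j`, so their difference is `(-1)^(j+1) (∂ s + s ∂)`, which the homotopy
relation kills. On `P 0` only `ε_{ΔP} h = ∂₀ s₀ = ε` survives, and this is `m ε e`.
-/

open DirectSum

section CompressedComplex

variable {R : Type*} [Ring R] {P : ℕ → Type*} [∀ i, AddCommGroup (P i)] [∀ i, Module R (P i)]

def compressedDifferential (d : ∀ i : ℕ, P (i + 1) →ₗ[R] P i) : (⨁ i, P i) →ₗ[R] ⨁ i, P i :=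
  toModule R ℕ _ fun i =>
    Nat.casesOn (motive := fun i => P i →ₗ[R] ⨁ i, P i) i 0 fun j => lof R ℕ P j ∘ₗ d j

def alternatingHomotopy (s : ∀ i : ℕ, P i →ₗ[R] P (i + 1)) : (⨁ i, P i) →ₗ[R] ⨁ i, P i :=
  toModule R ℕ _ fun i => ((-1 : ℤ) ^ i) • (lof R ℕ P (i + 1) ∘ₗ s i)

variable (d : ∀ i : ℕ, P (i + 1) →ₗ[R] P i) (s : ∀ i : ℕ, P i →ₗ[R] P (i + 1))

@[simp]
theorem compressedDifferential_lof_zero (x : P 0) :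
    compressedDifferential d (lof R ℕ P 0 x) = 0 :=
  toModule_lof R 0 x

@[simp]
theorem compressedDifferential_lof_succ (j : ℕ) (x : P (j + 1)) :
    compressedDifferential d (lof R ℕ P (j + 1) x) = lof R ℕ P j (d j x) :=
  toModule_lof R (j + 1) x

@[simp]
theorem alternatingHomotopy_lof (i : ℕ) (x : P i) :
    alternatingHomotopy s (lof R ℕ P i x) = ((-1 : ℤ) ^ i) • lof R ℕ P (i + 1) (s i x) :=
  toModule_lof R i x

theorem commutator_compressedDifferential_alternatingHomotopy_lof_zero (x : P 0) :
    (compressedDifferential d ∘ₗ alternatingHomotopy s -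
        alternatingHomotopy s ∘ₗ compressedDifferential d) (lof R ℕ P 0 x) =
      lof R ℕ P 0 (d 0 (s 0 x)) := by
  simp

theorem commutator_compressedDifferential_alternatingHomotopy_lof_succ (j : ℕ) (x : P (j + 1)) :
    (compressedDifferential d ∘ₗ alternatingHomotopy s -
        alternatingHomotopy s ∘ₗ compressedDifferential d) (lof R ℕ P (j + 1) x) =
      ((-1 : ℤ) ^ (j + 1)) • lof R ℕ P (j + 1) (d (j + 1) (s (j + 1) x) + s j (d j x)) := by
  simp only [LinearMap.sub_apply, LinearMap.comp_apply, alternatingHomotopy_lof, map_zsmul,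
    compressedDifferential_lof_succ, map_add, smul_add]
  rw [pow_succ, mul_neg_one, neg_smul, neg_smul]
  abel

end CompressedComplex

theorem homotopy_conjugation_identity
    (Λ : Type*) [Ring Λ]
    (P : ℕ → Type) [∀ i, AddCommGroup (P i)] [∀ i, Module Λ (P i)]
    (d : ∀ i : ℕ, P (i + 1) →ₗ[Λ] P i)
    (ε : P 0 →ₗ[Λ] P 0)
    -- the null-homotopy data (s_i)
    (s : ∀ i : ℕ, P i →ₗ[Λ] P (i + 1))
    (hs0 : d 0 ∘ₗ s 0 = ε)
    (hsi : ∀ i, d (i + 1) ∘ₗ s (i + 1) + s i ∘ₗ d i = 0)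
    -- the compressed differential on ΔP = ⊕ᵢ P_i
    (εΔ : (⨁ i, P i) →ₗ[Λ] ⨁ i, P i)
    (hεΔ : εΔ = DirectSum.toModule Λ ℕ (⨁ i, P i) (fun i =>
      match i with
      | 0 => 0
      | (j + 1) => (DirectSum.lof Λ ℕ P j) ∘ₗ d j))
    -- the map h with components (−1)^i s_i
    (h : (⨁ i, P i) →ₗ[Λ] ⨁ i, P i)
    (hh : h = DirectSum.toModule Λ ℕ (⨁ i, P i) (fun i =>
      ((-1 : ℤ) ^ i) • ((DirectSum.lof Λ ℕ P (i + 1)) ∘ₗ s i)))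
    -- the projection e and inclusion m
    (e : (⨁ i, P i) →ₗ[Λ] P 0) (he : e = DirectSum.component Λ ℕ P 0)
    (m : P 0 →ₗ[Λ] ⨁ i, P i) (hm : m = DirectSum.lof Λ ℕ P 0) :
    m ∘ₗ ε ∘ₗ e = εΔ ∘ₗ h - h ∘ₗ εΔ := by
  obtain rfl : εΔ = compressedDifferential d := by
    rw [hεΔ, compressedDifferential]
    congr 1
    funext i
    cases i <;> rfl
  obtain rfl : h = alternatingHomotopy s := hh
  subst he hm
  refine linearMap_ext Λ fun i => LinearMap.ext fun x => ?_
  simp only [LinearMap.comp_apply]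
  cases i with
  | zero =>
    rw [commutator_compressedDifferential_alternatingHomotopy_lof_zero, ← hs0]
    simp
  | succ j =>
    rw [commutator_compressedDifferential_alternatingHomotopy_lof_succ,
      ← LinearMap.comp_apply (d (j + 1)), ← LinearMap.comp_apply (s j), ← LinearMap.add_apply,
      hsi j]
    simp [component.of]
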